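/- Let n ≥ 2 and fix constants 0 < c' < 1 and M > 0. Then there exists ε > 0 such that for all v, ξ' ∈ ℝ^{n−1} with ‖v‖ ≤ M and ‖ξ'‖² ≤ c', the roots a₊ := (i − g + i·r₀)/(1+m) and a₋ := (i − g − i·r₀)/(1+m), where g := ⟨v,ξ'⟩, m := ‖v‖², s := ‖ξ'‖² and r₀ := ((1+ig)² − (1−s)(1+m))^{1/2} (principal branch), satisfy Im a₊ ≥ ε and Im a₋ ≥ ε. -/

import Mathlib

open Complex

/-- The principal-branch square root `r₀` of the discriminant of the symbol of the
boundary-flattened conjugated Laplacian (at `h = 0`), with `g = ⟨v,ξ'⟩`,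
`m = ‖v‖²`, `s = ‖ξ'‖²`. -/
noncomputable def r0 (g m s : ℝ) : ℂ :=
  ((1 + Complex.I * (g : ℂ)) ^ 2 - (1 - (s : ℂ)) * (1 + (m : ℂ))) ^ ((1 : ℂ) / 2)

/-- The root `a₊ = (i − g + i·r₀)/(1+m)`. -/
noncomputable def aPlus (g m s : ℝ) : ℂ :=
  (Complex.I - (g : ℂ) + Complex.I * r0 g m s) / (1 + (m : ℂ))

/-- The root `a₋ = (i − g − i·r₀)/(1+m)`. -/
noncomputable def aMinus (g m s : ℝ) : ℂ :=
  (Complex.I - (g : ℂ) - Complex.I * r0 g m s) / (1 + (m : ℂ))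

/-!
Writing `r₀ = x + iy` and `P = (1 - s)(1 + m)`, the equation `r₀² = (1 + ig)² - P` gives
`x² - y² = 1 - g² - P` and `xy = g`; eliminating `y` yields `(1 - x²)(x² + g² + P) = P`.
Since `P ≥ 1 - c' > 0` this forces `x² < 1`, with a gap `1 - x ≥ P / (2 (1 + g² + P))` that is
uniform once `g² ≤ ‖v‖²‖ξ'‖² ≤ M²`. Finally `Im a± = (1 ± x)/(1 + m)` with `x ≥ 0`.
-/

lemma re_cpow_one_half_nonneg (w : ℂ) : 0 ≤ (w ^ ((1 : ℂ) / 2)).re := by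
  rw [one_div, cpow_inv_two_re]
  exact Real.sqrt_nonneg _

lemma cpow_one_half_sq (w : ℂ) : (w ^ ((1 : ℂ) / 2)) ^ 2 = w := by
  rw [one_div]
  exact_mod_cast cpow_nat_inv_pow w two_ne_zero

lemma one_sub_re_sq_mul_eq {z : ℂ} {g P : ℝ} (hz : z ^ 2 = (1 + I * g) ^ 2 - P) :
    (1 - z.re ^ 2) * (z.re ^ 2 + g ^ 2 + P) = P := by
  have hre : z.re ^ 2 - z.im ^ 2 = 1 - g ^ 2 - P := by
    simpa [sq] using congrArg re hz
  have him : z.re * z.im = g := by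
    have := congrArg im hz
    simp only [sq, mul_im, add_re, add_im, one_re, one_im, mul_re, I_re, I_im, ofReal_re,
      ofReal_im, sub_im] at this
    linarith
  linear_combination (-z.re ^ 2) * hre - (z.re * z.im + g) * him

lemma div_le_one_sub_re {z : ℂ} {g P : ℝ} (hz : z ^ 2 = (1 + I * g) ^ 2 - P)
    (hre : 0 ≤ z.re) (hP : 0 < P) : P / (2 * (1 + g ^ 2 + P)) ≤ 1 - z.re := by
  have key := one_sub_re_sq_mul_eq hz
  have hre_sq_lt : z.re ^ 2 < 1 := by
    by_contra! h
    nlinarith [sq_nonneg g]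
  have hre_lt : z.re < 1 := by nlinarith
  rw [div_le_iff₀ (by positivity)]
  nlinarith [sq_nonneg g]

lemma div_le_one_sub_re_r0 {g m s c' G : ℝ} (hm : 0 ≤ m) (hs : s ≤ c') (hc' : c' < 1)
    (hg : g ^ 2 ≤ G) : (1 - c') / (2 * (2 + G - c')) ≤ 1 - (r0 g m s).re := by
  set P := (1 - s) * (1 + m)
  have hP : 1 - c' ≤ P := by nlinarith
  have hz : r0 g m s ^ 2 = (1 + I * g) ^ 2 - (P : ℂ) := by
    rw [r0, cpow_one_half_sq]
    simp only [P]
    push_cast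
    ring
  calc (1 - c') / (2 * (2 + G - c'))
      ≤ P / (2 * (1 + g ^ 2 + P)) := by
        rw [div_le_div_iff₀ (by nlinarith [sq_nonneg g]) (by nlinarith [sq_nonneg g])]
        nlinarith [sq_nonneg g]
    _ ≤ 1 - (r0 g m s).re := div_le_one_sub_re hz (re_cpow_one_half_nonneg _) (by linarith)

lemma aPlus_im (g m s : ℝ) : (aPlus g m s).im = (1 + (r0 g m s).re) / (1 + m) := by
  rw [aPlus, ← ofReal_one, ← ofReal_add, div_ofReal_im]
  simp

lemma aMinus_im (g m s : ℝ) : (aMinus g m s).im = (1 - (r0 g m s).re) / (1 + m) := by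
  rw [aMinus, ← ofReal_one, ← ofReal_add, div_ofReal_im]
  simp

theorem roots_uniformly_in_upper_half_plane_general (n : ℕ)
    (c' M : ℝ) (hc1 : c' < 1) :
    ∃ ε > 0, ∀ v ξ' : EuclideanSpace ℝ (Fin (n - 1)), ‖v‖ ≤ M → ‖ξ'‖ ^ 2 ≤ c' →
      ε ≤ (aPlus (inner ℝ v ξ') (‖v‖ ^ 2) (‖ξ'‖ ^ 2)).im ∧
      ε ≤ (aMinus (inner ℝ v ξ') (‖v‖ ^ 2) (‖ξ'‖ ^ 2)).im := by
  set κ := (1 - c') / (2 * (2 + M ^ 2 - c'))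
  have hκ : 0 < κ := div_pos (by linarith) (by nlinarith [sq_nonneg M])
  have hκ1 : κ ≤ 1 := by
    rw [div_le_one (by nlinarith [sq_nonneg M])]
    nlinarith [sq_nonneg M]
  refine ⟨κ / (1 + M ^ 2), by positivity, fun v ξ' hv hξ => ?_⟩
  have hm : ‖v‖ ^ 2 ≤ M ^ 2 := pow_le_pow_left₀ (norm_nonneg v) hv 2
  have hg : inner ℝ v ξ' ^ 2 ≤ M ^ 2 := by
    calc inner ℝ v ξ' ^ 2 ≤ ‖v‖ ^ 2 * ‖ξ'‖ ^ 2 := by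
          rw [← mul_pow, ← sq_abs]
          exact pow_le_pow_left₀ (abs_nonneg _) (abs_real_inner_le_norm v ξ') 2
      _ ≤ M ^ 2 := by nlinarith [sq_nonneg ‖ξ'‖]
  have hgap := div_le_one_sub_re_r0 (sq_nonneg ‖v‖) hξ hc1 hg
  have hx : 0 ≤ (r0 (inner ℝ v ξ') (‖v‖ ^ 2) (‖ξ'‖ ^ 2)).re := re_cpow_one_half_nonneg _
  rw [aPlus_im, aMinus_im]
  constructor <;> apply div_le_div₀ (by linarith) _ (by positivity) (by linarith)
  · linarith
  · exact hgap

/-- Uniform lower bound on the imaginary parts of the roots `a₊`, `a₋` over the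
compact region `‖v‖ ≤ M`, `‖ξ'‖² ≤ c'` with `0 < c' < 1`. -/
theorem roots_uniformly_in_upper_half_plane (n : ℕ) (hn : 2 ≤ n)
    (c' M : ℝ) (hc0 : 0 < c') (hc1 : c' < 1) (hM : 0 < M) :
    ∃ ε > 0, ∀ v ξ' : EuclideanSpace ℝ (Fin (n - 1)), ‖v‖ ≤ M → ‖ξ'‖ ^ 2 ≤ c' →
      ε ≤ (aPlus (inner ℝ v ξ') (‖v‖ ^ 2) (‖ξ'‖ ^ 2)).im ∧
      ε ≤ (aMinus (inner ℝ v ξ') (‖v‖ ^ 2) (‖ξ'‖ ^ 2)).im :=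
  roots_uniformly_in_upper_half_plane_general n c' M hc1
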